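/- arXiv:2304.06543 — 4 statements merged into one kernel-verified Lean document; each statement's English description precedes it below -/
import Mathlib

section
/- If a finite directed multigraph with integer-weighted edges has every vertex with in-degree equal to out-degree, and the total weight of all edges is negative, then the graph contains a directed cycle of negative total weight. -/
/-- A list of weighted directed edges (source, target, weight) forms a directed
cycle: nonempty, consecutive edges chain, and the walk closes up. -/
def IsDirCycle {V : Type*} (l : List (V × V × ℤ)) : Prop :=
  l ≠ [] ∧ l.Chain' (fun e f => e.2.1 = f.1) ∧
    l.getLast?.map (fun e => e.2.1) = l.head?.map (fun e => e.1)

/-- Every vertex has in-degree equal to out-degree in the edge multiset `E`. -/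
def DegBalanced {V : Type*} [DecidableEq V] (E : Multiset (V × V × ℤ)) : Prop :=
  ∀ v : V, (E.filter fun e => e.1 = v).card = (E.filter fun e => e.2.1 = v).card

/-- Total weight of an edge multiset. -/
def wsum {V : Type*} (E : Multiset (V × V × ℤ)) : ℤ := (E.map fun e => e.2.2).sum

/-
A balanced edge multiset is a sum of directed cycles. Starting from any edge and repeatedly leaving
the current endpoint along an unused edge, balance guarantees that the walk can only get stuck at
its starting vertex, so it closes up into a cycle; removing that cycle leaves a smaller balanced
multiset. The total weight is then the sum of the cycle weights, so if it is negative, some cycle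
is negative.
-/

theorem Multiset.map_tsub_eq_of_map_eq {α β : Type*} [DecidableEq α] {f g : α → β}
    {s t : Multiset α} (hts : t ≤ s) (hs : s.map f = s.map g) (ht : t.map f = t.map g) :
    (s - t).map f = (s - t).map g := by
  rw [← tsub_add_cancel_of_le hts, Multiset.map_add, Multiset.map_add, ht] at hs
  exact add_right_cancel hs

section

variable {V : Type*}

theorem degBalanced_iff [DecidableEq V] {E : Multiset (V × V × ℤ)} :
    DegBalanced E ↔ E.map (·.1) = E.map (·.2.1) := by
  simp only [DegBalanced, Multiset.ext, Multiset.count_map, eq_comm]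

theorem wsum_sum (cs : List (Multiset (V × V × ℤ))) : wsum cs.sum = (cs.map wsum).sum :=
  map_list_sum
    (Multiset.sumAddMonoidHom.comp (Multiset.mapAddMonoidHom fun e : V × V × ℤ => e.2.2)) cs

theorem isDirCycle_iff {l : List (V × V × ℤ)} :
    IsDirCycle l ↔ l ≠ [] ∧ l.IsChain (fun e f => e.2.1 = f.1) ∧
      l.getLast?.map (fun e => e.2.1) = l.head?.map (fun e => e.1) :=
  Iff.rfl

theorem isDirCycle_singleton {e : V × V × ℤ} : IsDirCycle [e] ↔ e.2.1 = e.1 := by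
  simp [isDirCycle_iff]

theorem isDirCycle_cons_cons {e f : V × V × ℤ} (hef : e.2.1 = f.1) (l : List (V × V × ℤ))
    (w : ℤ) : IsDirCycle (e :: f :: l) ↔ IsDirCycle ((e.1, f.2.1, w) :: l) := by
  cases l <;> simp [isDirCycle_iff, List.isChain_cons_cons, hef]

theorem IsDirCycle.map_fst_eq_map_snd_fst {l : List (V × V × ℤ)} (hl : IsDirCycle l) :
    (l : Multiset (V × V × ℤ)).map (·.1) = (l : Multiset (V × V × ℤ)).map (·.2.1) := by
  obtain ⟨e, l, rfl⟩ := List.exists_cons_of_ne_nil hl.1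
  induction l generalizing e with
  | nil => simp [isDirCycle_singleton.1 hl]
  | cons f l ih =>
    have hef : e.2.1 = f.1 := (List.isChain_cons_cons.1 hl.2.1).1
    have hcontr := ih (e.1, f.2.1, 0) ((isDirCycle_cons_cons hef l 0).1 hl)
    simp only [← Multiset.cons_coe, Multiset.map_cons] at hcontr ⊢
    rw [← hef, Multiset.cons_swap, hcontr]

theorem exists_isDirCycle_cons_le [DecidableEq V] (E : Multiset (V × V × ℤ)) (e : V × V × ℤ)
    (hE : (e ::ₘ E).map (·.1) = (e ::ₘ E).map (·.2.1)) :
    ∃ l : List (V × V × ℤ), (l : Multiset (V × V × ℤ)) ≤ E ∧ IsDirCycle (e :: l) := by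
  by_cases hloop : e.2.1 = e.1
  · exact ⟨[], by simp, isDirCycle_singleton.2 hloop⟩
  obtain ⟨f, hfE, hf⟩ : ∃ f ∈ E, f.1 = e.2.1 := by
    have : e.2.1 ∈ (e ::ₘ E).map (·.1) := by simp [hE]
    simpa [hloop] using this
  -- replace `e` and its successor `f` by the shortcut edge from `e.1` to `f.2.1`
  have hE' : ((e.1, f.2.1, e.2.2) ::ₘ E.erase f).map (·.1)
      = ((e.1, f.2.1, e.2.2) ::ₘ E.erase f).map (·.2.1) := by
    rw [← Multiset.cons_erase hfE] at hE
    simp only [Multiset.map_cons] at hE ⊢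
    rw [hf, Multiset.cons_swap] at hE
    exact (Multiset.cons_inj_right _).1 hE
  obtain ⟨l, hlE, hl⟩ := exists_isDirCycle_cons_le (E.erase f) _ hE'
  refine ⟨f :: l, ?_, (isDirCycle_cons_cons hf.symm l _).2 hl⟩
  rw [← Multiset.cons_erase hfE, ← Multiset.cons_coe]
  exact Multiset.cons_le_cons f hlE
termination_by E.card
decreasing_by exact Multiset.card_erase_lt_of_mem hfE

theorem exists_isDirCycle_decomposition [DecidableEq V] (E : Multiset (V × V × ℤ))
    (hE : E.map (·.1) = E.map (·.2.1)) :
    ∃ cs : List (List (V × V × ℤ)), (∀ c ∈ cs, IsDirCycle c) ∧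
      (cs.map ((↑) : List (V × V × ℤ) → Multiset (V × V × ℤ))).sum = E := by
  rcases Multiset.empty_or_exists_mem E with rfl | ⟨e, he⟩
  · exact ⟨[], by simp, by simp⟩
  obtain ⟨l, hlE, hl⟩ :=
    exists_isDirCycle_cons_le (E.erase e) e (by rwa [Multiset.cons_erase he])
  have hcE : ((e :: l : List (V × V × ℤ)) : Multiset (V × V × ℤ)) ≤ E := by
    rw [← Multiset.cons_erase he, ← Multiset.cons_coe]
    exact Multiset.cons_le_cons e hlE
  obtain ⟨cs, hcs, hsum⟩ := exists_isDirCycle_decomposition _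
    (Multiset.map_tsub_eq_of_map_eq hcE hE hl.map_fst_eq_map_snd_fst)
  refine ⟨(e :: l) :: cs, List.forall_mem_cons.2 ⟨hl, hcs⟩, ?_⟩
  rw [List.map_cons, List.sum_cons, hsum, add_tsub_cancel_of_le hcE]
termination_by E.card
decreasing_by
  rw [Multiset.card_sub hcE]
  have := Multiset.card_le_card hcE
  simp only [Multiset.coe_card, List.length_cons] at this ⊢
  omega

end

theorem balanced_neg_total_weight_has_neg_cycle_general {V : Type*} [DecidableEq V]
    (E : Multiset (V × V × ℤ)) (hbal : DegBalanced E) (hneg : wsum E < 0) :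
    ∃ l : List (V × V × ℤ), IsDirCycle l ∧ (l : Multiset (V × V × ℤ)) ≤ E ∧
      (l.map fun e => e.2.2).sum < 0 := by
  obtain ⟨cs, hcs, rfl⟩ := exists_isDirCycle_decomposition E (degBalanced_iff.1 hbal)
  rw [wsum_sum, List.map_map] at hneg
  obtain ⟨c, hc, hwc⟩ := List.exists_lt_of_sum_lt _ (fun _ => (0 : ℤ)) (by simpa using hneg)
  exact ⟨c, hcs c hc, List.le_sum_of_mem (List.mem_map_of_mem hc), by simpa [wsum] using hwc⟩

theorem balanced_neg_total_weight_has_neg_cycle {V : Type*} [Fintype V] [DecidableEq V]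
    (E : Multiset (V × V × ℤ)) (hbal : DegBalanced E) (hneg : wsum E < 0) :
    ∃ l : List (V × V × ℤ), IsDirCycle l ∧ (l : Multiset (V × V × ℤ)) ≤ E ∧
      (l.map fun e => e.2.2).sum < 0 :=
  balanced_neg_total_weight_has_neg_cycle_general E hbal hneg
end

section
/- An allotment A for the strict-LBDD problem (capacities must be respected, total capacity equals total demand) is optimal if and only if its allotment subspace multigraph Γ(A) contains no simple directed cycle of negative total cost, where edges transferring dummy (slack) capacity have cost zero. -/
/-- Load of service center `s` under allotment `A`. -/
def load {D S : Type*} [Fintype D] [DecidableEq S] (A : D → S) (s : S) : ℕ :=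
  (Finset.univ.filter fun x => A x = s).card

/-- `A` is a feasible allotment: no service center exceeds its capacity. -/
def Feasible {D S : Type*} [Fintype D] [Fintype S] [DecidableEq S]
    (c : S → ℕ) (A : D → S) : Prop :=
  ∀ s : S, load A s ≤ c s

/-- Γ(A) contains a simple directed cycle of negative total cost: distinct service
centers `s i`, with the demand unit `d i` (currently assigned to `s i`) transferred
from `s i` to `s (i+1)`, the total transfer cost being negative. -/
def HasNegSimpleCycle {D S : Type*} (CM : D → S → ℤ) (A : D → S) : Prop :=
  ∃ (m : ℕ) (s : Fin m → S) (d : Fin m → D), 0 < m ∧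
    Function.Injective s ∧ (∀ i, A (d i) = s i) ∧
    (∑ i : Fin m, (CM (d i) (s (finRotate m i)) - CM (d i) (s i))) < 0

/-!
Rotating the demand units of a simple cycle of Γ(A) one step along the cycle preserves every
load and changes the cost by the weight of the cycle, so a negative cycle refutes optimality.
Conversely, with tight capacities every feasible `B` has the same loads as `A`. Then a unit on
which `A` and `B` disagree leads, from its `A`-center to its `B`-center, to another disagreeing
unit leaving that center; in the finite set of such centers this walk closes up into a simple
cycle of Γ(A) that `B` traverses. Undoing the cycle in `B` costs minus its (nonnegative) weight
and shrinks the disagreement set, so induction gives `cost A ≤ cost B`.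
-/

open Function Finset

theorem Set.MapsTo.exists_iterate_mem_periodicPts {α : Type*} {f : α → α} {s : Set α}
    (hf : Set.MapsTo f s s) (hs : s.Finite) {x : α} (hx : x ∈ s) :
    ∃ n, f^[n] x ∈ periodicPts f := by
  obtain ⟨a, b, hab, heq⟩ :=
    Set.Finite.exists_lt_map_eq_of_forall_mem (f := (f^[·] x)) (fun n => hf.iterate n hx) hs
  refine ⟨a, mk_mem_periodicPts (Nat.sub_pos_of_lt hab) ?_⟩
  rw [IsPeriodicPt, IsFixedPt, ← iterate_add_apply, Nat.sub_add_cancel hab.le, heq]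

theorem val_finRotate {m : ℕ} (k : Fin m) : (finRotate m k : ℕ) = (k + 1) % m := by
  have : NeZero m := k.neZero
  rw [finRotate_apply, Fin.val_add, Fin.val_one', Nat.add_mod_mod]

theorem Set.MapsTo.exists_cycle {α : Type*} {f : α → α} {s : Set α}
    (hf : Set.MapsTo f s s) (hs : s.Finite) {x : α} (hx : x ∈ s) :
    ∃ (m : ℕ) (t : Fin m → α), 0 < m ∧ Injective t ∧ (∀ k, t k ∈ s) ∧
      ∀ k, f (t k) = t (finRotate m k) := by
  obtain ⟨n, hn⟩ := hf.exists_iterate_mem_periodicPts hs hx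
  refine ⟨minimalPeriod f (f^[n] x), fun k => f^[k] (f^[n] x),
    minimalPeriod_pos_of_mem_periodicPts hn, fun k l hkl => Fin.ext ?_,
    fun k => (hf.iterate k) (hf.iterate n hx), fun k => ?_⟩
  · exact iterate_injOn_Iio_minimalPeriod k.isLt l.isLt hkl
  · simp only [val_finRotate, iterate_mod_minimalPeriod_eq, iterate_succ_apply']

theorem Fintype.sum_sub_sum_eq_of_eqOn_compl_range {ι D M : Type*} [Fintype ι] [Fintype D]
    [AddCommGroup M] {e : ι → D} (he : Injective e) {f g : D → M}
    (hfg : ∀ x ∉ Set.range e, f x = g x) :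
    ∑ x, f x - ∑ x, g x = ∑ k, (f (e k) - g (e k)) := by
  rw [← sum_sub_distrib]
  exact (Fintype.sum_of_injective e he _ _ (fun x hx => sub_eq_zero.2 (hfg x hx))
    fun _ => rfl).symm

section Allotment

variable {D S : Type*} [Fintype D] [DecidableEq S]

theorem load_comp_perm (A : D → S) (σ : Equiv.Perm D) (s : S) :
    load (A ∘ σ) s = load A s := by
  simp only [load, card_filter]
  exact Equiv.sum_comp σ fun x => if A x = s then 1 else 0

theorem load_eq_of_feasible [Fintype S] {c : S → ℕ} (htight : ∑ s, c s = Fintype.card D)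
    {A : D → S} (hA : Feasible c A) (s : S) : load A s = c s := by
  have hsum : ∑ s, load A s = ∑ s, c s := by
    rw [htight, ← card_univ, card_eq_sum_card_fiberwise fun x _ => mem_univ (A x)]
    rfl
  exact (sum_eq_sum_iff_of_le fun s _ => hA s).1 hsum s (mem_univ s)

theorem exists_ne_of_load_eq {A B : D → S} (hload : ∀ s, load A s = load B s) {x : D}
    (hx : A x ≠ B x) : ∃ y, A y = B x ∧ A y ≠ B y := by
  by_contra! h
  have hsub : univ.filter (fun y => A y = B x) ⊆ univ.filter (fun y => B y = B x) :=
    monotone_filter_right _ fun y _ hy => (h y hy).symm.trans hy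
  have hxA : x ∈ univ.filter (fun y => A y = B x) := by
    rw [eq_of_subset_of_card_le hsub (hload (B x)).ge]
    simp
  simp [hx] at hxA

theorem exists_cycle_of_load_eq {A B : D → S} (hload : ∀ s, load A s = load B s)
    (hAB : A ≠ B) :
    ∃ (m : ℕ) (t : Fin m → S) (e : Fin m → D), 0 < m ∧ Injective t ∧
      (∀ k, A (e k) = t k) ∧ (∀ k, B (e k) = t (finRotate m k)) ∧
      ∀ k, A (e k) ≠ B (e k) := by
  obtain ⟨x, hx⟩ := ne_iff.1 hAB
  have : Nonempty D := ⟨x⟩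
  set U := {y | A y ≠ B y}
  -- `w z` is a disagreeing unit at center `z`; `B ∘ w` follows it to its `B`-center.
  set w := invFunOn A U
  have hw : ∀ z ∈ A '' U, w z ∈ U ∧ A (w z) = z := fun z hz => invFunOn_pos hz
  have hmaps : Set.MapsTo (B ∘ w) (A '' U) (A '' U) := fun z hz => by
    obtain ⟨y, hy, hyne⟩ := exists_ne_of_load_eq hload (hw z hz).1
    exact ⟨y, hyne, hy⟩
  obtain ⟨m, t, hm, ht, htU, hrot⟩ :=
    hmaps.exists_cycle ((Set.toFinite U).image A) (Set.mem_image_of_mem A hx)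
  exact ⟨m, t, w ∘ t, hm, ht, fun k => (hw _ (htU k)).2, hrot, fun k => (hw _ (htU k)).1⟩

theorem exists_load_eq_rotation (A : D → S) {ι : Type*} [Fintype ι]
    {e : ι → D} (he : Injective e) (π : Equiv.Perm ι) :
    ∃ B : D → S, (∀ s, load B s = load A s) ∧ (∀ k, B (e k) = A (e (π k))) ∧
      ∀ x ∉ Set.range e, B x = A x := by
  classical
  let σ := π.viaFintypeEmbedding ⟨e, he⟩
  exact ⟨A ∘ σ, load_comp_perm A σ,
    fun k => congrArg A (π.viaFintypeEmbedding_apply_image _ k),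
    fun x hx => congrArg A (π.viaFintypeEmbedding_apply_notMem_range (f := ⟨e, he⟩) hx)⟩

theorem exists_load_eq_sum_lt_of_hasNegSimpleCycle {CM : D → S → ℤ} {A : D → S}
    (hcyc : HasNegSimpleCycle CM A) :
    ∃ B : D → S, (∀ s, load B s = load A s) ∧ ∑ x, CM x (B x) < ∑ x, CM x (A x) := by
  obtain ⟨m, t, d, -, ht, hAd, hneg⟩ := hcyc
  have hd : Injective d := fun k l hkl => ht (by rw [← hAd, ← hAd, hkl])
  obtain ⟨B, hBload, hBd, hBoff⟩ := exists_load_eq_rotation A hd (finRotate m)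
  refine ⟨B, hBload, sub_neg.1 ?_⟩
  rw [Fintype.sum_sub_sum_eq_of_eqOn_compl_range hd fun x hx => by rw [hBoff x hx]]
  simpa only [hBd, hAd] using hneg

theorem exists_closer_of_not_hasNegSimpleCycle {CM : D → S → ℤ} {A B : D → S}
    (hA : ¬HasNegSimpleCycle CM A) (hload : ∀ s, load A s = load B s) (hAB : A ≠ B) :
    ∃ B' : D → S, (∀ s, load A s = load B' s) ∧ ∑ x, CM x (B' x) ≤ ∑ x, CM x (B x) ∧
      #{x | A x ≠ B' x} < #{x | A x ≠ B x} := by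
  obtain ⟨m, t, e, hm, ht, hAe, hBe, hne⟩ := exists_cycle_of_load_eq hload hAB
  have he : Injective e := fun k l hkl => ht (by rw [← hAe, ← hAe, hkl])
  obtain ⟨B', hB'load, hB'e, hB'off⟩ := exists_load_eq_rotation B he (finRotate m).symm
  have hB'A : ∀ k, B' (e k) = A (e k) := fun k => by
    rw [hB'e, hBe, Equiv.apply_symm_apply, hAe]
  have hcycle : 0 ≤ ∑ k, (CM (e k) (t (finRotate m k)) - CM (e k) (t k)) :=
    not_lt.1 fun hlt => hA ⟨m, t, e, hm, ht, hAe, hlt⟩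
  refine ⟨B', fun s => (hload s).trans (hB'load s).symm, sub_nonpos.1 ?_, card_lt_card ?_⟩
  · rw [Fintype.sum_sub_sum_eq_of_eqOn_compl_range he fun x hx => by rw [hB'off x hx]]
    simp only [hB'A, hAe, hBe]
    rw [sum_sub_distrib] at hcycle ⊢
    linarith
  · have hsub : univ.filter (fun x => A x ≠ B' x) ⊆ univ.filter (fun x => A x ≠ B x) := by
      refine monotone_filter_right _ fun x _ hx => ?_
      by_cases hxe : x ∈ Set.range e
      · obtain ⟨k, rfl⟩ := hxe
        exact absurd (hB'A k).symm hx
      · rwa [← hB'off x hxe]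
    exact (ssubset_iff_of_subset hsub).2 ⟨e ⟨0, hm⟩, by simp [hne], by simp [hB'A]⟩

theorem sum_le_of_not_hasNegSimpleCycle {CM : D → S → ℤ} {A : D → S}
    (hA : ¬HasNegSimpleCycle CM A) {B : D → S} (hload : ∀ s, load A s = load B s) :
    ∑ x, CM x (A x) ≤ ∑ x, CM x (B x) := by
  induction hn : #{x | A x ≠ B x} using Nat.strong_induction_on generalizing B with
  | _ n ih =>
    by_cases hAB : A = B
    · rw [hAB]
    obtain ⟨B', hB'load, hB'le, hB'card⟩ := exists_closer_of_not_hasNegSimpleCycle hA hload hAB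
    exact (ih _ (hn ▸ hB'card) hB'load rfl).trans hB'le

end Allotment

theorem strictLBDD_optimal_iff_no_neg_simple_cycle_general {D S : Type*}
    [Fintype D] [Fintype S] [DecidableEq S]
    (CM : D → S → ℤ) (c : S → ℕ) (htight : ∑ s : S, c s = Fintype.card D)
    (A : D → S) (hA : Feasible c A) :
    (∀ B : D → S, Feasible c B → (∑ x : D, CM x (A x)) ≤ ∑ x : D, CM x (B x))
      ↔ ¬ HasNegSimpleCycle CM A := by
  constructor
  · rintro hopt hcyc
    obtain ⟨B, hBload, hBlt⟩ := exists_load_eq_sum_lt_of_hasNegSimpleCycle hcyc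
    exact (hopt B fun s => (hBload s).trans_le (hA s)).not_gt hBlt
  · intro hno B hB
    exact sum_le_of_not_hasNegSimpleCycle hno fun s =>
      (load_eq_of_feasible htight hA s).trans (load_eq_of_feasible htight hB s).symm

theorem strictLBDD_optimal_iff_no_neg_simple_cycle {D S : Type*}
    [Fintype D] [Fintype S] [DecidableEq D] [DecidableEq S]
    (CM : D → S → ℤ) (c : S → ℕ) (htight : ∑ s : S, c s = Fintype.card D)
    (A : D → S) (hA : Feasible c A) :
    (∀ B : D → S, Feasible c B → (∑ x : D, CM x (A x)) ≤ ∑ x : D, CM x (B x))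
      ↔ ¬ HasNegSimpleCycle CM A :=
  strictLBDD_optimal_iff_no_neg_simple_cycle_general CM c htight A hA
end

section
/- In a degree-balanced directed multigraph of negative total weight, if every directed cycle through a distinguished edge e has weight at least W ≥ 0, then the multigraph obtained by deleting some directed cycle containing e contains a directed cycle of negative weight avoiding e. -/
theorem wsum_coe {V : Type*} (C : List (V × V × ℤ)) :
    wsum (C : Multiset (V × V × ℤ)) = (C.map fun f => f.2.2).sum := by
  simp [wsum]

section
variable {V : Type*} [DecidableEq V]

theorem wsum_sub {E F : Multiset (V × V × ℤ)} (h : F ≤ E) :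
    wsum (E - F) = wsum E - wsum F := by
  rw [eq_sub_iff_add_eq, wsum, wsum, wsum, ← Multiset.sum_add, ← Multiset.map_add,
    tsub_add_cancel_of_le h]

theorem List.IsChain.card_filter_target_add_eq {l : List (V × V × ℤ)}
    (hl : l.IsChain (fun e f => e.2.1 = f.1)) (v : V) :
    (l.filter fun e => e.2.1 = v).length
        + (if l.head?.map (fun e => e.1) = some v then 1 else 0)
      = (l.filter fun e => e.1 = v).length
        + (if l.getLast?.map (fun e => e.2.1) = some v then 1 else 0) := by
  induction l with
  | nil => simp
  | cons a t ih =>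
    cases t with
    | nil => simp only [List.filter_singleton]; split_ifs <;> simp_all
    | cons b t =>
      obtain ⟨hab, ht⟩ := List.isChain_cons_cons.mp hl
      have hcount := ih ht
      simp only [List.filter_cons, List.head?_cons, List.getLast?_cons_cons, Option.map_some,
        Option.some.injEq] at hcount ⊢
      split_ifs at hcount ⊢ <;> simp_all

theorem IsDirCycle.degBalanced {C : List (V × V × ℤ)} (hC : IsDirCycle C) :
    DegBalanced (C : Multiset (V × V × ℤ)) := by
  intro v
  have hcount := List.IsChain.card_filter_target_add_eq hC.2.1 v
  rw [hC.2.2] at hcount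
  simp only [Multiset.filter_coe, Multiset.coe_card]
  omega

theorem DegBalanced.sub {E F : Multiset (V × V × ℤ)} (hE : DegBalanced E) (hF : DegBalanced F)
    (h : F ≤ E) : DegBalanced (E - F) := by
  intro v
  rw [Multiset.filter_sub, Multiset.filter_sub, Multiset.card_sub (Multiset.filter_le_filter _ h),
    Multiset.card_sub (Multiset.filter_le_filter _ h), hE v, hF v]

theorem DegBalanced.exists_mem_sub_of_trail {E : Multiset (V × V × ℤ)} (hE : DegBalanced E)
    {T : List (V × V × ℤ)} (hT : T.IsChain (fun e f => e.2.1 = f.1)) (hTE : ↑T ≤ E)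
    {a : V × V × ℤ} (ha : T.getLast? = some a) (hopen : T.head?.map (fun e => e.1) ≠ some a.2.1) :
    ∃ f ∈ E - T, f.1 = a.2.1 := by
  have hcount := hT.card_filter_target_add_eq a.2.1
  rw [ha, if_neg hopen, Option.map_some, if_pos rfl, add_zero] at hcount
  have hpos : 0 < ((E - T).filter fun e => e.1 = a.2.1).card := by
    have hle := Multiset.card_le_card (Multiset.filter_le_filter (fun e => e.2.1 = a.2.1) hTE)
    rw [Multiset.filter_sub, Multiset.card_sub (Multiset.filter_le_filter _ hTE), hE a.2.1]
    simp only [Multiset.filter_coe, Multiset.coe_card] at hle ⊢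
    omega
  obtain ⟨f, hf⟩ := Multiset.card_pos_iff_exists_mem.mp hpos
  exact ⟨f, (Multiset.mem_filter.mp hf).1, (Multiset.mem_filter.mp hf).2⟩

theorem DegBalanced.exists_isDirCycle_of_trail {E : Multiset (V × V × ℤ)} (hE : DegBalanced E)
    (T : List (V × V × ℤ)) (hne : T ≠ []) (hT : T.IsChain (fun e f => e.2.1 = f.1))
    (hTE : ↑T ≤ E) : ∃ C : List (V × V × ℤ), IsDirCycle C ∧ ↑C ≤ E := by
  by_cases hclosed : T.getLast?.map (fun e => e.2.1) = T.head?.map (fun e => e.1)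
  · exact ⟨T, ⟨hne, hT, hclosed⟩, hTE⟩
  obtain ⟨a, ha⟩ := Option.ne_none_iff_exists'.mp (mt List.getLast?_eq_none_iff.mp hne)
  obtain ⟨f, hf, hfa⟩ :=
    hE.exists_mem_sub_of_trail hT hTE ha (by rw [ha] at hclosed; exact Ne.symm hclosed)
  have hTfE : ↑(T ++ [f]) ≤ E := by
    rw [← Multiset.coe_add, Multiset.coe_singleton, ← le_tsub_iff_left hTE]
    exact Multiset.singleton_le.mpr hf
  have hlen : T.length < E.card := by
    simpa using Multiset.card_le_card hTfE
  exact hE.exists_isDirCycle_of_trail (T ++ [f]) (by simp)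
    (hT.append (List.isChain_singleton f) (by simp [ha, hfa])) hTfE
termination_by E.card - T.length
decreasing_by simp only [List.length_append, List.length_singleton]; omega

theorem DegBalanced.exists_isDirCycle {E : Multiset (V × V × ℤ)} (hE : DegBalanced E)
    (hE0 : E ≠ 0) : ∃ C : List (V × V × ℤ), IsDirCycle C ∧ ↑C ≤ E := by
  obtain ⟨f, hf⟩ := Multiset.exists_mem_of_ne_zero hE0
  exact hE.exists_isDirCycle_of_trail [f] (List.cons_ne_nil f []) (List.isChain_singleton f)
    (by simpa using hf)

theorem DegBalanced.exists_isDirCycle_wsum_neg {E : Multiset (V × V × ℤ)} (hE : DegBalanced E)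
    (hneg : wsum E < 0) :
    ∃ C : List (V × V × ℤ), IsDirCycle C ∧ ↑C ≤ E ∧ (C.map fun f => f.2.2).sum < 0 := by
  have hE0 : E ≠ 0 := by rintro rfl; simp [wsum] at hneg
  obtain ⟨C, hC, hCE⟩ := hE.exists_isDirCycle hE0
  by_cases hCneg : (C.map fun f => f.2.2).sum < 0
  · exact ⟨C, hC, hCE, hCneg⟩
  have hrest : wsum (E - (C : Multiset (V × V × ℤ))) < 0 := by
    rw [wsum_sub hCE, wsum_coe]
    omega
  have hcard : (E - (C : Multiset (V × V × ℤ))).card < E.card := by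
    have hCpos : 0 < (C : Multiset (V × V × ℤ)).card := List.length_pos_iff.mpr hC.1
    rw [Multiset.card_sub hCE]
    have := Multiset.card_le_card hCE
    omega
  obtain ⟨C', hC', hC'E, hC'neg⟩ := (hE.sub hC.degBalanced hCE).exists_isDirCycle_wsum_neg hrest
  exact ⟨C', hC', hC'E.trans tsub_le_self, hC'neg⟩
termination_by E.card
decreasing_by exact hcard

end

theorem delete_cycle_through_e_leaves_neg_cycle_avoiding_e_general {V : Type*}
    [DecidableEq V]
    (H : Multiset (V × V × ℤ)) (hbal : DegBalanced H) (hneg : wsum H < 0)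
    (e : V × V × ℤ) (W : ℤ) (hW : 0 ≤ W)
    (hthru : ∃ C : List (V × V × ℤ), IsDirCycle C ∧ (C : Multiset (V × V × ℤ)) ≤ H ∧ e ∈ C)
    (hbound : ∀ C : List (V × V × ℤ), IsDirCycle C → (C : Multiset (V × V × ℤ)) ≤ H →
      e ∈ C → W ≤ (C.map fun f => f.2.2).sum) :
    ∃ C1 : List (V × V × ℤ), IsDirCycle C1 ∧ (C1 : Multiset (V × V × ℤ)) ≤ H ∧ e ∈ C1 ∧
      ∃ C2 : List (V × V × ℤ), IsDirCycle C2 ∧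
        (C2 : Multiset (V × V × ℤ)) ≤ H - (C1 : Multiset (V × V × ℤ)) ∧
        e ∉ C2 ∧ (C2.map fun f => f.2.2).sum < 0 := by
  obtain ⟨C1, hC1, hC1H, heC1⟩ := hthru
  have hrest : wsum (H - (C1 : Multiset (V × V × ℤ))) < 0 := by
    rw [wsum_sub hC1H, wsum_coe]
    linarith [hbound C1 hC1 hC1H heC1]
  obtain ⟨C2, hC2, hC2H, hC2neg⟩ :=
    (hbal.sub hC1.degBalanced hC1H).exists_isDirCycle_wsum_neg hrest
  refine ⟨C1, hC1, hC1H, heC1, C2, hC2, hC2H, fun heC2 => ?_, hC2neg⟩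
  linarith [hbound C2 hC2 (hC2H.trans tsub_le_self) heC2]

theorem delete_cycle_through_e_leaves_neg_cycle_avoiding_e {V : Type*}
    [Fintype V] [DecidableEq V]
    (H : Multiset (V × V × ℤ)) (hbal : DegBalanced H) (hneg : wsum H < 0)
    (e : V × V × ℤ) (he : e ∈ H) (W : ℤ) (hW : 0 ≤ W)
    (hthru : ∃ C : List (V × V × ℤ), IsDirCycle C ∧ (C : Multiset (V × V × ℤ)) ≤ H ∧ e ∈ C)
    (hbound : ∀ C : List (V × V × ℤ), IsDirCycle C → (C : Multiset (V × V × ℤ)) ≤ H →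
      e ∈ C → W ≤ (C.map fun f => f.2.2).sum) :
    ∃ C1 : List (V × V × ℤ), IsDirCycle C1 ∧ (C1 : Multiset (V × V × ℤ)) ≤ H ∧ e ∈ C1 ∧
      ∃ C2 : List (V × V × ℤ), IsDirCycle C2 ∧
        (C2 : Multiset (V × V × ℤ)) ≤ H - (C1 : Multiset (V × V × ℤ)) ∧
        e ∉ C2 ∧ (C2.map fun f => f.2.2).sum < 0 :=
  delete_cycle_through_e_leaves_neg_cycle_avoiding_e_general H hbal hneg e W hW hthru hbound
end

section
/- Excess-demand padding preserves optimality: if total demand exceeds total capacity by m > 0, adding a dummy service center of capacity m whose assignment cost to every demand unit is max + 1 (max being the largest entry of CM) increases the optimal strict-LBDD objective by exactly m·(max + 1), and optimal allotments of the padded instance restrict to optimal allotments of the original relaxed problem. -/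
/-- Feasibility in the padded instance: `A` assigns each demand unit to a real
service center (`some s`, within capacity `c s`) or to the dummy service center
(`none`, within its capacity `m`). -/
def PFeasible {D S : Type*} [Fintype D] [DecidableEq S]
    (c : S → ℕ) (m : ℕ) (A : D → Option S) : Prop :=
  (∀ s : S, (Finset.univ.filter fun x => A x = some s).card ≤ c s) ∧
    (Finset.univ.filter fun x => A x = none).card ≤ m

/-- Cost in the padded instance: assignment to the dummy center costs `M + 1`. -/
def pcost {D S : Type*} [Fintype D] (CM : D → S → ℕ) (M : ℕ) (A : D → Option S) : ℕ :=
  ∑ x : D, (A x).elim (M + 1) (CM x)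

/-- Cost in the original relaxed problem: only real assignments are counted. -/
def rcost {D S : Type*} [Fintype D] (CM : D → S → ℕ) (A : D → Option S) : ℕ :=
  ∑ x : D, (A x).elim 0 (CM x)

lemma none_card_eq {D S : Type*} [Fintype D] [Fintype S] [DecidableEq D] [DecidableEq S]
    (c : S → ℕ) (m : ℕ) (hcap : (∑ s : S, c s) + m = Fintype.card D)
    (A : D → Option S) (hA : PFeasible c m A) :
    (Finset.univ.filter fun x => A x = none).card = m := by
  have key : (∑ s : S, (Finset.univ.filter fun x => A x = some s).card)
      + (Finset.univ.filter fun x => A x = none).card = Fintype.card D := by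
    simp only [Finset.card_filter]
    rw [Finset.sum_comm]
    rw [← Finset.sum_add_distrib]
    rw [Fintype.card_eq_sum_ones]
    apply Finset.sum_congr rfl
    intro x _
    cases h : A x with
    | none => simp [h]
    | some s => simp [h, Finset.sum_ite_eq']
  have h1 : (∑ s : S, (Finset.univ.filter fun x => A x = some s).card) ≤ ∑ s : S, c s :=
    Finset.sum_le_sum fun s _ => hA.1 s
  have h2 := hA.2
  omega

lemma pcost_eq {D S : Type*} [Fintype D] [Fintype S] [DecidableEq D] [DecidableEq S]
    (CM : D → S → ℕ) (c : S → ℕ) (m : ℕ) (hcap : (∑ s : S, c s) + m = Fintype.card D)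
    (M : ℕ) (A : D → Option S) (hA : PFeasible c m A) :
    pcost CM M A = rcost CM A + m * (M + 1) := by
  have := none_card_eq c m hcap A hA
  unfold pcost rcost
  have h3 : m * (M + 1) = ∑ x : D, (if A x = none then (M + 1) else 0) := by
    rw [Finset.sum_ite, Finset.sum_const, Finset.sum_const_zero, add_zero, this,
      smul_eq_mul]
  rw [h3, ← Finset.sum_add_distrib]
  apply Finset.sum_congr rfl
  intro x _
  cases h : A x <;> simp [h]

theorem excess_demand_padding_preserves_optimality {D S : Type*}
    [Fintype D] [Fintype S] [DecidableEq D] [DecidableEq S]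
    (CM : D → S → ℕ) (c : S → ℕ) (m : ℕ) (hm : 0 < m)
    (hcap : (∑ s : S, c s) + m = Fintype.card D)
    (M : ℕ) (hM : M = Finset.univ.sup fun p : D × S => CM p.1 p.2)
    (A : D → Option S) (hA : PFeasible c m A) :
    pcost CM M A = rcost CM A + m * (M + 1) ∧
      ((∀ B : D → Option S, PFeasible c m B → pcost CM M A ≤ pcost CM M B)
        ↔ (∀ B : D → Option S, PFeasible c m B → rcost CM A ≤ rcost CM B)) := by
  refine ⟨pcost_eq CM c m hcap M A hA, ?_⟩
  constructor <;> intro h B hB <;> have hBe := pcost_eq CM c m hcap M B hB <;>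
    have hAe := pcost_eq CM c m hcap M A hA <;> have := h B hB <;> omega
end
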